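/- arXiv:2507.01851 — 2 statements merged into one kernel-verified Lean document; each statement's English description precedes it below -/
import Mathlib

section
/- For distinct integers n₁ < n₂ with n₁, n₂ ≥ 3, r_μ(C_{n₁}) = r_μ(C_{n₂}) if and only if n₁ = 6 and n₂ = 7. -/
open SimpleGraph Polynomial

/-- Two vertices `u`, `v` are `X`-visible in `G` if some shortest `u`\u2013`v` path
has no internal vertex in `X`. -/
def SimpleGraph.XVisible {V : Type*} (G : SimpleGraph V) (X : Set V) (u v : V) : Prop :=
  ∃ p : G.Walk u v, p.IsPath ∧ p.length = G.dist u v ∧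
    ∀ w ∈ p.support, w ∈ X → w = u ∨ w = v

/-- `X` is a mutual-visibility set of `G`. -/
def SimpleGraph.IsMutualVisibilitySet {V : Type*} (G : SimpleGraph V) (X : Set V) : Prop :=
  ∀ u ∈ X, ∀ v ∈ X, G.XVisible X u v


open scoped Classical in
/-- The number of mutual-visibility sets of cardinality 3 (the maximum) in the cycle `C_n`. -/
noncomputable def rmuC (n : ℕ) : ℕ :=
  (Finset.univ.filter (fun X : Finset (Fin n) =>
    X.card = 3 ∧ (cycleGraph n).IsMutualVisibilitySet ↑X)).card

/-!
A 3-set of vertices of `C_n` is in mutual visibility iff the three arcs into which it cuts the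
cycle all have length at most `n / 2`: a pair can only be seen along the arc avoiding the third
vertex, and that arc is a geodesic iff it is not longer than the complementary one. Recording a
triple through a fixed vertex by the forward positions `0 < i < j < n` of the other two gives
`3 r_μ(C_n) = n g(n)` with `2 g(2m+1) = m(m+1)` and `2 g(2m+2) = m(m+5)`. These cubics increase
strictly along each parity class, `r_μ(C_{2m+1}) < r_μ(C_{2m+2})`, `r_μ(C_{2m+2}) < r_μ(C_{2m+5})`,
and `r_μ(C_{2m+2}) = r_μ(C_{2m+3})` only for `m = 2`.
-/

open Finset

variable {n : ℕ}

theorem Fin.val_sub_cases (a b : Fin n) :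
    b.val ≤ a.val ∧ (a - b).val = a.val - b.val ∨
      a.val < b.val ∧ (a - b).val = n + a.val - b.val := by
  rcases le_or_gt b.val a.val with h | h
  · exact .inl ⟨h, Fin.sub_val_of_le h⟩
  · exact .inr ⟨h, Fin.coe_sub_iff_lt.mpr h⟩

namespace SimpleGraph

section General

variable {V : Type*} {G : SimpleGraph V}

theorem Walk.apply_le_apply_add_length {u v : V} (p : G.Walk u v) (f : V → ℕ)
    (hf : ∀ d ∈ p.darts, f d.fst ≤ f d.snd + 1) : f u ≤ f v + p.length := by
  induction p with
  | nil => simp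
  | cons h q ih =>
    simp only [Walk.darts_cons, List.mem_cons, forall_eq_or_imp] at hf
    have := ih hf.2
    have := hf.1
    simp only [Walk.length_cons]
    omega

theorem XVisible.refl (G : SimpleGraph V) (X : Set V) (u : V) : G.XVisible X u u :=
  ⟨.nil, .nil, by simp, by simp⟩

theorem XVisible.symm {X : Set V} {u v : V} (h : G.XVisible X u v) : G.XVisible X v u := by
  obtain ⟨p, hp, hlen, hsupp⟩ := h
  refine ⟨p.reverse, hp.reverse, by rw [Walk.length_reverse, hlen, dist_comm], ?_⟩
  intro x hx hxX
  rw [Walk.support_reverse, List.mem_reverse] at hx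
  exact (hsupp x hx hxX).symm

theorem isMutualVisibilitySet_triple_iff {u v w : V} :
    G.IsMutualVisibilitySet {u, v, w} ↔
      G.XVisible {u, v, w} u v ∧ G.XVisible {u, v, w} v w ∧ G.XVisible {u, v, w} w u := by
  refine ⟨fun h => ⟨h u (by simp) v (by simp), h v (by simp) w (by simp),
    h w (by simp) u (by simp)⟩, fun ⟨huv, hvw, hwu⟩ => ?_⟩
  simp only [IsMutualVisibilitySet, Set.mem_insert_iff, Set.mem_singleton_iff]
  rintro x (rfl | rfl | rfl) y (rfl | rfl | rfl) <;>
    first | exact XVisible.refl _ _ _ | assumption | exact XVisible.symm ‹_›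

end General

theorem cycleGraph_exists_forward_walk (u v : Fin n) :
    ∃ p : (cycleGraph n).Walk u v, p.length = (v - u).val ∧
      ∀ x ∈ p.support, (x - u).val ≤ (v - u).val := by
  have := u.neZero
  induction h : (v - u).val generalizing u with
  | zero =>
    obtain rfl : u = v := (sub_eq_zero.mp (Fin.ext h)).symm
    exact ⟨.nil, rfl, by simp⟩
  | succ k ih =>
    have hn : 2 ≤ n := by have := (v - u).isLt; omega
    have h1 : (1 : Fin n).val = 1 := Nat.mod_eq_of_lt hn
    have hadj : (cycleGraph n).Adj u (u + 1) := by
      rw [cycleGraph_adj', add_sub_cancel_left, h1]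
      exact .inr rfl
    have hstep : ∀ x : Fin n, (x - u).val =
        if (x - (u + 1)).val + 1 = n then 0 else (x - (u + 1)).val + 1 := fun x => by
      rw [show x - u = x - (u + 1) + 1 by abel, Fin.val_add_eq_ite, h1]
      have := (x - (u + 1)).isLt
      split_ifs <;> omega
    obtain ⟨q, hq, hsupp⟩ := ih (u + 1) (by have := hstep v; split_ifs at this <;> omega)
    refine ⟨.cons hadj q, by simp [hq], fun x hx => ?_⟩
    rw [Walk.support_cons, List.mem_cons] at hx
    rcases hx with rfl | hx
    · simp
    · have := hsupp x hx
      have := hstep x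
      split_ifs at this <;> omega

theorem cycleGraph_dist (u v : Fin n) :
    (cycleGraph n).dist u v = min (v - u).val (u - v).val := by
  refine le_antisymm (le_min ?_ ?_) ?_
  · obtain ⟨p, hp, -⟩ := cycleGraph_exists_forward_walk u v
    exact hp ▸ dist_le p
  · obtain ⟨p, hp, -⟩ := cycleGraph_exists_forward_walk v u
    exact hp ▸ dist_comm (G := cycleGraph n) ▸ dist_le p
  · have := u.neZero
    obtain ⟨p, hp⟩ := (cycleGraph_exists_forward_walk u v).elim fun p _ =>
      Reachable.exists_walk_length_eq_dist ⟨p⟩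
    have := p.apply_le_apply_add_length (fun x => min (v - x).val (x - v).val) fun d _ => by
      have := cycleGraph_adj'.mp d.adj
      have := Fin.val_sub_cases d.fst d.snd; have := Fin.val_sub_cases d.snd d.fst
      have := Fin.val_sub_cases v d.fst; have := Fin.val_sub_cases d.fst v
      have := Fin.val_sub_cases v d.snd; have := Fin.val_sub_cases d.snd v
      omega
    simpa [hp] using this

theorem cycleGraph_xVisible_of_short_empty_arc {X : Set (Fin n)} {u v : Fin n}
    (hd : 2 * (v - u).val ≤ n) (hX : ∀ x ∈ X, (x - u).val = 0 ∨ (v - u).val ≤ (x - u).val) :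
    (cycleGraph n).XVisible X u v := by
  have := u.neZero
  obtain ⟨p, hp, hsupp⟩ := cycleGraph_exists_forward_walk u v
  have hdist : p.length = (cycleGraph n).dist u v := by
    rw [cycleGraph_dist, hp]
    have := Fin.val_sub_cases u v; have := Fin.val_sub_cases v u
    omega
  refine ⟨p, p.isPath_of_length_eq_dist hdist, hdist, fun x hx hxX => ?_⟩
  have := hsupp x hx
  rcases hX x hxX with h | h
  · exact .inl (sub_eq_zero.mp (Fin.val_eq_zero_iff.mp h))
  · exact .inr (sub_left_inj.mp (Fin.ext (by omega) : x - u = v - u))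

/-- Along a walk avoiding `w`, `(· - w).val` grows by at most one per step (it only jumps when
stepping onto `w`), so such a walk from `u` to `v` is at least as long as the arc from `u` to `v`
avoiding `w`, which is longer than `n / 2`. -/
theorem cycleGraph_not_xVisible_of_short_blocked_arc {X : Set (Fin n)} {u v w : Fin n}
    (hd : 2 * (v - u).val < n) (hw : w ∈ X) (hw0 : 0 < (w - u).val)
    (hwv : (w - u).val < (v - u).val) :
    ¬ (cycleGraph n).XVisible X u v := by
  have := u.neZero
  rintro ⟨p, -, hlen, hsupp⟩
  have hwp : w ∉ p.support := fun h => by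
    rcases hsupp w h hw with rfl | rfl
    · simp at hw0
    · exact lt_irrefl _ hwv
  have := p.apply_le_apply_add_length (fun x => (x - w).val) fun d hd => by
    have hsnd : d.snd ≠ w := fun h => hwp (h ▸ p.dart_snd_mem_support_of_mem_darts hd)
    have := cycleGraph_adj'.mp d.adj
    have := Fin.val_ne_of_ne hsnd
    have := Fin.val_sub_cases d.fst d.snd; have := Fin.val_sub_cases d.snd d.fst
    have := Fin.val_sub_cases d.fst w; have := Fin.val_sub_cases d.snd w
    omega
  rw [hlen, cycleGraph_dist] at this
  have := Fin.val_sub_cases u v; have := Fin.val_sub_cases v u; have := Fin.val_sub_cases w u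
  have := Fin.val_sub_cases u w; have := Fin.val_sub_cases v w
  omega

theorem cycleGraph_xVisible_iff {X : Set (Fin n)} {u v w : Fin n} (hw : w ∈ X) (hwu : w ≠ u)
    (hwv : w ≠ v) (hX : ∀ x ∈ X, x = u ∨ x = v ∨ (v - u).val < (x - u).val) :
    (cycleGraph n).XVisible X u v ↔ 2 * (v - u).val ≤ n := by
  refine ⟨fun h => ?_, fun hd => cycleGraph_xVisible_of_short_empty_arc hd fun x hx => ?_⟩
  · by_contra! hd
    have hvw : (v - u).val < (w - u).val := ((hX w hw).resolve_left hwu).resolve_left hwv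
    have := Fin.val_sub_cases u v; have := Fin.val_sub_cases v u
    have := Fin.val_sub_cases w u; have := Fin.val_sub_cases w v
    exact cycleGraph_not_xVisible_of_short_blocked_arc (by omega) hw (by omega) (by omega) h.symm
  · have := u.neZero
    rcases hX x hx with rfl | rfl | h
    · simp
    · exact .inr le_rfl
    · exact .inr h.le

theorem cycleGraph_isMutualVisibilitySet_triple_iff {u v w : Fin n}
    (huv : 0 < (v - u).val) (hvw : (v - u).val < (w - u).val) :
    (cycleGraph n).IsMutualVisibilitySet {u, v, w} ↔
      2 * (v - u).val ≤ n ∧ 2 * (w - v).val ≤ n ∧ 2 * (u - w).val ≤ n := by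
  have := Fin.val_sub_cases u v; have := Fin.val_sub_cases v u; have := Fin.val_sub_cases w u
  have := Fin.val_sub_cases u w; have := Fin.val_sub_cases v w; have := Fin.val_sub_cases w v
  have hvu : v ≠ u := fun h => by omega
  have hwu : w ≠ u := fun h => by omega
  have hwv : w ≠ v := fun h => by omega
  rw [isMutualVisibilitySet_triple_iff, cycleGraph_xVisible_iff (w := w) (by simp) hwu hwv,
    cycleGraph_xVisible_iff (w := u) (by simp) hvu.symm hwu.symm,
    cycleGraph_xVisible_iff (w := v) (by simp) hwv.symm hvu]
  all_goals
    simp only [Set.mem_insert_iff, Set.mem_singleton_iff]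
    rintro x (rfl | rfl | rfl)
    all_goals first | exact .inl rfl | exact .inr (.inl rfl) | exact .inr (.inr (by omega))

end SimpleGraph

/-- The forward positions `(i, j)` of the other two vertices of a mutual-visibility triple of `C_n`
through a fixed vertex: the three gaps `i`, `j - i`, `n - j` are at most `n / 2`. -/
def gapPairs (n : ℕ) : Finset (ℕ × ℕ) :=
  {p ∈ range n ×ˢ range n | 0 < p.1 ∧ p.1 < p.2 ∧ 2 * p.1 ≤ n ∧ 2 * (p.2 - p.1) ≤ n ∧ n ≤ 2 * p.2}

theorem mem_gapPairs {p : ℕ × ℕ} : p ∈ gapPairs n ↔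
    0 < p.1 ∧ p.1 < p.2 ∧ p.2 < n ∧ 2 * p.1 ≤ n ∧ 2 * (p.2 - p.1) ≤ n ∧ n ≤ 2 * p.2 := by
  simp only [gapPairs, mem_filter, mem_product, mem_range]
  omega

namespace Fin

variable {a x y x' y' : Fin n}

theorem add_mem_triple_add_iff {z : Fin n} :
    a + z ∈ ({a, a + x, a + y} : Finset (Fin n)) ↔
      z.val = 0 ∨ z.val = x.val ∨ z.val = y.val := by
  have := a.neZero
  simp only [mem_insert, mem_singleton, add_eq_left, add_right_inj, Fin.ext_iff, val_zero]

theorem card_triple_add (hx : 0 < x.val) (hxy : x.val < y.val) :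
    #({a, a + x, a + y} : Finset (Fin n)) = 3 := by
  have := a.neZero
  refine card_eq_three.mpr ⟨a, a + x, a + y, ?_, ?_, ?_, rfl⟩ <;>
    simp only [ne_eq, left_eq_add, add_right_inj, Fin.ext_iff, val_zero] <;> omega

theorem val_eq_of_triple_add_eq (hx : 0 < x.val) (hxy : x.val < y.val) (hx' : 0 < x'.val)
    (hxy' : x'.val < y'.val) (h : ({a, a + x, a + y} : Finset (Fin n)) = {a, a + x', a + y'}) :
    x.val = x'.val ∧ y.val = y'.val := by
  have h1 := add_mem_triple_add_iff.mp (h ▸ mem_insert_of_mem (mem_insert_self (a + x) _))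
  have h2 := add_mem_triple_add_iff.mp
    (h ▸ mem_insert_of_mem (mem_insert_of_mem (mem_singleton_self (a + y))))
  have h3 := add_mem_triple_add_iff.mp (h.symm ▸ mem_insert_of_mem (mem_insert_self (a + x') _))
  have h4 := add_mem_triple_add_iff.mp
    (h.symm ▸ mem_insert_of_mem (mem_insert_of_mem (mem_singleton_self (a + y'))))
  omega

theorem exists_eq_triple_add {X : Finset (Fin n)} (hX : #X = 3) (ha : a ∈ X) :
    ∃ x y : Fin n, 0 < x.val ∧ x.val < y.val ∧ X = {a, a + x, a + y} := by
  have := a.neZero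
  obtain ⟨b, c, hbc, hbc'⟩ :=
    card_eq_two.mp (by rw [card_erase_of_mem ha, hX] : #(X.erase a) = 2)
  have hb : b ≠ a := (mem_erase.mp (hbc' ▸ mem_insert_self b {c})).1
  have hc : c ≠ a := (mem_erase.mp (hbc' ▸ mem_insert_of_mem (mem_singleton_self c))).1
  have hX' : X = {a, a + (b - a), a + (c - a)} := by
    rw [add_sub_cancel, add_sub_cancel, ← hbc', insert_erase ha]
  have := val_sub_cases b a; have := val_sub_cases c a
  have := val_ne_of_ne hb; have := val_ne_of_ne hc; have := val_ne_of_ne hbc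
  rcases lt_or_gt_of_ne (show (b - a).val ≠ (c - a).val by omega) with h | h
  · exact ⟨b - a, c - a, by omega, h, hX'⟩
  · exact ⟨c - a, b - a, by omega, h, by rw [hX', pair_comm]⟩

end Fin

theorem cycleGraph_isMutualVisibilitySet_triple_add_iff {a x y : Fin n} (hx : 0 < x.val)
    (hxy : x.val < y.val) :
    (cycleGraph n).IsMutualVisibilitySet {a, a + x, a + y} ↔ (x.val, y.val) ∈ gapPairs n := by
  have := a.neZero
  rw [cycleGraph_isMutualVisibilitySet_triple_iff (by rwa [add_sub_cancel_left])
    (by rwa [add_sub_cancel_left, add_sub_cancel_left]), add_sub_cancel_left,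
    add_sub_add_left_eq_sub, sub_add_cancel_left, Fin.val_neg, mem_gapPairs]
  have := Fin.val_sub_cases y x
  have hy0 : y ≠ 0 := fun h => by simp [h] at hxy
  simp only [hy0, if_false]
  omega

open scoped Classical in
theorem card_cycleGraph_mvTriples_mem (a : Fin n) :
    #{X ∈ ({X | #X = 3 ∧ (cycleGraph n).IsMutualVisibilitySet ↑X} : Finset (Finset (Fin n))) |
      a ∈ X} = #(gapPairs n) := by
  symm
  refine card_bij (fun p hp => {a, a + ⟨p.1, by have := mem_gapPairs.mp hp; omega⟩,
    a + ⟨p.2, (mem_gapPairs.mp hp).2.2.1⟩}) (fun p hp => ?_) (fun p hp q hq h => ?_) ?_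
  · have hp' := mem_gapPairs.mp hp
    simp only [mem_filter, mem_univ, true_and, mem_insert_self, and_true, coe_insert,
      coe_singleton]
    exact ⟨Fin.card_triple_add hp'.1 hp'.2.1,
      (cycleGraph_isMutualVisibilitySet_triple_add_iff hp'.1 hp'.2.1).mpr hp⟩
  · have hp' := mem_gapPairs.mp hp
    have hq' := mem_gapPairs.mp hq
    have := Fin.val_eq_of_triple_add_eq hp'.1 hp'.2.1 hq'.1 hq'.2.1 h
    exact Prod.ext this.1 this.2
  · intro X hX
    simp only [mem_filter, mem_univ, true_and] at hX
    obtain ⟨⟨hcard, hmv⟩, ha⟩ := hX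
    obtain ⟨x, y, hx, hxy, rfl⟩ := Fin.exists_eq_triple_add hcard ha
    rw [coe_insert, coe_insert, coe_singleton,
      cycleGraph_isMutualVisibilitySet_triple_add_iff hx hxy] at hmv
    exact ⟨_, hmv, rfl⟩

theorem three_mul_rmuC (n : ℕ) : 3 * rmuC n = n * #(gapPairs n) := by
  classical
  calc 3 * rmuC n
      = ∑ X ∈ ({X | #X = 3 ∧ (cycleGraph n).IsMutualVisibilitySet ↑X} :
          Finset (Finset (Fin n))), #X := by
        rw [sum_congr rfl fun X hX => (mem_filter.mp hX).2.1, sum_const, smul_eq_mul, mul_comm]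
        rfl
    _ = n * #(gapPairs n) := by
        rw [sum_card fun a => card_cycleGraph_mvTriples_mem a, Fintype.card_fin]

theorem two_mul_card_gapPairs_odd (m : ℕ) : 2 * #(gapPairs (2 * m + 1)) = m * (m + 1) := by
  have hfib : ∀ k ∈ range m, #{p ∈ gapPairs (2 * m + 1) | p.1 - 1 = k} = k + 1 := by
    intro k hk
    rw [mem_range] at hk
    have : {p ∈ gapPairs (2 * m + 1) | p.1 - 1 = k} = {k + 1} ×ˢ Ico (m + 1) (m + k + 2) := by
      ext ⟨i, j⟩
      simp only [mem_filter, mem_gapPairs, mem_product, mem_singleton, mem_Ico]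
      omega
    rw [this, card_product, card_singleton, Nat.card_Ico]
    omega
  rw [card_eq_sum_card_fiberwise (f := fun p => p.1 - 1) (t := range m) fun p hp => by
    simp only [mem_coe, mem_gapPairs, mem_range] at hp ⊢; omega, sum_congr rfl hfib]
  have := sum_range_id_mul_two (m + 1)
  rw [sum_range_succ', add_zero, Nat.add_sub_cancel] at this
  linarith

theorem two_mul_card_gapPairs_even (m : ℕ) : 2 * #(gapPairs (2 * m + 2)) = m * (m + 5) := by
  have hfib : ∀ k ∈ range m, #{p ∈ gapPairs (2 * m + 2) | p.1 - 1 = k} = k + 2 := by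
    intro k hk
    rw [mem_range] at hk
    have : {p ∈ gapPairs (2 * m + 2) | p.1 - 1 = k} = {k + 1} ×ˢ Ico (m + 1) (m + k + 3) := by
      ext ⟨i, j⟩
      simp only [mem_filter, mem_gapPairs, mem_product, mem_singleton, mem_Ico]
      omega
    rw [this, card_product, card_singleton, Nat.card_Ico]
    omega
  have hlast : #{p ∈ gapPairs (2 * m + 2) | p.1 - 1 = m} = m := by
    have : {p ∈ gapPairs (2 * m + 2) | p.1 - 1 = m} = {m + 1} ×ˢ Ico (m + 2) (2 * m + 2) := by
      ext ⟨i, j⟩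
      simp only [mem_filter, mem_gapPairs, mem_product, mem_singleton, mem_Ico]
      omega
    rw [this, card_product, card_singleton, Nat.card_Ico]
    omega
  rw [card_eq_sum_card_fiberwise (f := fun p => p.1 - 1) (t := range (m + 1)) fun p hp => by
    simp only [mem_coe, mem_gapPairs, mem_range] at hp ⊢; omega, sum_range_succ,
    sum_congr rfl hfib, hlast, sum_add_distrib, sum_const, card_range, smul_eq_mul]
  have := sum_range_id_mul_two (m + 1)
  rw [sum_range_succ, Nat.add_sub_cancel] at this
  linarith

theorem six_mul_rmuC_odd (m : ℕ) : 6 * rmuC (2 * m + 1) = (2 * m + 1) * m * (m + 1) := by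
  have h3 := three_mul_rmuC (2 * m + 1)
  have h2 := two_mul_card_gapPairs_odd m
  calc 6 * rmuC (2 * m + 1) = (2 * m + 1) * (2 * #(gapPairs (2 * m + 1))) := by
        rw [mul_left_comm, ← h3]; ring
    _ = _ := by rw [h2]; ring

theorem three_mul_rmuC_even (m : ℕ) : 3 * rmuC (2 * m + 2) = (m + 1) * m * (m + 5) := by
  have h3 := three_mul_rmuC (2 * m + 2)
  have h2 := two_mul_card_gapPairs_even m
  calc 3 * rmuC (2 * m + 2) = (m + 1) * (2 * #(gapPairs (2 * m + 2))) := by rw [h3]; ring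
    _ = _ := by rw [h2]; ring

theorem rmuC_odd_strictMono : StrictMono fun m => rmuC (2 * m + 1) := by
  refine strictMono_nat_of_lt_succ fun m => ?_
  have h := six_mul_rmuC_odd m
  have h' := six_mul_rmuC_odd (m + 1)
  nlinarith

theorem rmuC_even_strictMono : StrictMono fun m => rmuC (2 * m + 2) := by
  refine strictMono_nat_of_lt_succ fun m => ?_
  have h := three_mul_rmuC_even m
  have h' := three_mul_rmuC_even (m + 1)
  nlinarith

theorem rmuC_odd_lt_rmuC_even {m m' : ℕ} (hm : 0 < m) (h : m ≤ m') :
    rmuC (2 * m + 1) < rmuC (2 * m' + 2) := by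
  refine lt_of_lt_of_le ?_ (rmuC_even_strictMono.monotone h)
  have h := six_mul_rmuC_odd m
  have h' := three_mul_rmuC_even m
  nlinarith

theorem rmuC_even_lt_rmuC_odd {m m' : ℕ} (h : m + 2 ≤ m') :
    rmuC (2 * m + 2) < rmuC (2 * m' + 1) := by
  refine lt_of_lt_of_le ?_ (rmuC_odd_strictMono.monotone h)
  have h := six_mul_rmuC_odd (m + 2)
  have h' := three_mul_rmuC_even m
  nlinarith

theorem rmuC_even_eq_rmuC_succ_iff (m : ℕ) : rmuC (2 * m + 2) = rmuC (2 * m + 3) ↔ m = 2 := by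
  have h := six_mul_rmuC_odd (m + 1)
  have h' := three_mul_rmuC_even m
  rw [show 2 * (m + 1) + 1 = 2 * m + 3 by ring] at h
  constructor
  · intro heq
    rw [heq] at h'
    have : (m + 1) * (3 * m) = (m + 1) * 6 := by nlinarith
    have := Nat.eq_of_mul_eq_mul_left (Nat.succ_pos m) this
    omega
  · rintro rfl
    omega

theorem rmu_eq_iff_six_seven (n₁ n₂ : ℕ) (h₁ : 3 ≤ n₁) (h₁₂ : n₁ < n₂) :
    rmuC n₁ = rmuC n₂ ↔ n₁ = 6 ∧ n₂ = 7 := by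
  refine ⟨fun h => ?_, fun ⟨h6, h7⟩ => h6 ▸ h7 ▸ (rmuC_even_eq_rmuC_succ_iff 2).mpr rfl⟩
  obtain ⟨a, rfl | rfl⟩ : ∃ a, n₁ = 2 * a + 2 ∨ n₁ = 2 * a + 1 := ⟨(n₁ - 1) / 2, by omega⟩ <;>
    obtain ⟨b, rfl | rfl⟩ : ∃ b, n₂ = 2 * b + 2 ∨ n₂ = 2 * b + 1 := ⟨(n₂ - 1) / 2, by omega⟩
  · exact absurd h (rmuC_even_strictMono (by omega : a < b)).ne
  · obtain rfl | hb : b = a + 1 ∨ a + 2 ≤ b := by omega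
    · have := (rmuC_even_eq_rmuC_succ_iff a).mp h
      omega
    · exact absurd h (rmuC_even_lt_rmuC_odd hb).ne
  · exact absurd h (rmuC_odd_lt_rmuC_even (by omega) (by omega : a ≤ b)).ne
  · exact absurd h (rmuC_odd_strictMono (by omega : a < b)).ne
end

section
/- Let G and H be non-complete disjoint graphs with |V(H)| ≥ 2, and let B ⊆ V(H). Then X = V(G) ∪ B is a mutual-visibility set of the join G ∨ H if and only if B = ∅, or the subgraph of H induced by B is a clique, or B is a mutual-visibility set in H with diam_H(B) = 2. -/
open SimpleGraph Polynomial

/-- The join `G ∨ H` of two graphs on disjoint vertex sets. -/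
def graphJoin {α β : Type*} (G : SimpleGraph α) (H : SimpleGraph β) : SimpleGraph (α ⊕ β) :=
  SimpleGraph.fromRel (fun u v => match u, v with
    | Sum.inl a, Sum.inl b => G.Adj a b
    | Sum.inr a, Sum.inr b => H.Adj a b
    | Sum.inl _, Sum.inr _ => True
    | Sum.inr _, Sum.inl _ => False)

/-- The diameter of a set of vertices: the largest distance in `H` between two of its members. -/
noncomputable def setDiam {β : Type*} (H : SimpleGraph β) (B : Set β) : ℕ :=
  sSup ((fun p : β × β => H.dist p.1 p.2) '' (B ×ˢ B))

/-
In `G ∨ H` with both sides nonempty any two vertices are at distance at most two, so a set `X` is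
a mutual-visibility set exactly when every two distinct non-adjacent vertices of `X` have a common
neighbour outside `X`. For `X = V(G) ∪ B` that neighbour lies in `V(H) \ B`; as `G` is not
complete, the condition becomes `B ≠ V(H)` together with the same condition for `B` in `H`. The
latter holds trivially for a clique (and then `B ≠ V(H)` because `H` is not complete), and for a
non-clique it says precisely that `B` is a mutual-visibility set of `H` of diameter two, which
already forces a vertex outside `B`.
-/

namespace SimpleGraph

variable {V : Type*} {G : SimpleGraph V} {X : Set V} {u v w : V}

def HasExternalMidpoints (G : SimpleGraph V) (X : Set V) : Prop :=
  ∀ u ∈ X, ∀ v ∈ X, u ≠ v → ¬ G.Adj u v → ∃ w ∉ X, G.Adj u w ∧ G.Adj w v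

lemma dist_eq_two_iff :
    G.dist u v = 2 ↔ u ≠ v ∧ ¬ G.Adj u v ∧ (G.commonNeighbors u v).Nonempty := by
  rw [dist, ENat.toNat_eq_iff two_ne_zero]
  exact edist_eq_two_iff

lemma dist_eq_two_of_adj_of_adj (huv : u ≠ v) (hnadj : ¬ G.Adj u v) (hw : G.Adj u w)
    (hw' : G.Adj w v) : G.dist u v = 2 :=
  dist_eq_two_iff.2 ⟨huv, hnadj, w, G.mem_commonNeighbors.2 ⟨hw, hw'.symm⟩⟩

lemma dist_le_two_of_adj_of_adj (hw : G.Adj u w) (hw' : G.Adj w v) : G.dist u v ≤ 2 :=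
  dist_le (.cons hw hw'.toWalk)

lemma xVisible_refl (X : Set V) (u : V) : G.XVisible X u u :=
  ⟨.nil, by simp, by simp, by simp⟩

lemma Adj.xVisible (h : G.Adj u v) : G.XVisible X u v :=
  ⟨h.toWalk, by simp [h.ne], by simp [dist_eq_one_iff_adj.2 h], by simp⟩

lemma XVisible.reachable (h : G.XVisible X u v) : G.Reachable u v :=
  let ⟨p, _⟩ := h
  p.reachable

lemma xVisible_iff_of_dist_eq_two (h : G.dist u v = 2) :
    G.XVisible X u v ↔ ∃ w ∉ X, G.Adj u w ∧ G.Adj w v := by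
  constructor
  · rintro ⟨p, -, hlen, hsupp⟩
    rw [h] at hlen
    match p, hlen with
    | .cons hw (.cons hw' .nil), _ =>
      refine ⟨_, fun hX => ?_, hw, hw'⟩
      rcases hsupp _ (by simp) hX with rfl | rfl
      exacts [hw.ne rfl, hw'.ne rfl]
  · rintro ⟨w, hwX, hw, hw'⟩
    have huv : u ≠ v := (dist_eq_two_iff.1 h).1
    refine ⟨.cons hw hw'.toWalk, ?_, by simp [h], ?_⟩
    · simp [Walk.isPath_def, hw.ne, hw'.ne, huv]
    · simp only [Walk.support_cons, Adj.toWalk, Walk.support_nil, List.mem_cons,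
        List.not_mem_nil, or_false]
      rintro x (rfl | rfl | rfl) hxX
      exacts [.inl rfl, absurd hxX hwX, .inr rfl]

lemma HasExternalMidpoints.isMutualVisibilitySet (h : G.HasExternalMidpoints X) :
    G.IsMutualVisibilitySet X := by
  intro u hu v hv
  by_cases huv : u = v
  · exact huv ▸ xVisible_refl X u
  by_cases hadj : G.Adj u v
  · exact hadj.xVisible
  obtain ⟨w, hwX, hw, hw'⟩ := h u hu v hv huv hadj
  exact (xVisible_iff_of_dist_eq_two (dist_eq_two_of_adj_of_adj huv hadj hw hw')).2
    ⟨w, hwX, hw, hw'⟩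

lemma HasExternalMidpoints.dist_le_two (h : G.HasExternalMidpoints X) (hu : u ∈ X) (hv : v ∈ X) :
    G.dist u v ≤ 2 := by
  by_cases huv : u = v
  · simp [huv]
  by_cases hadj : G.Adj u v
  · simp [dist_eq_one_iff_adj.2 hadj]
  obtain ⟨w, -, hw, hw'⟩ := h u hu v hv huv hadj
  exact dist_le_two_of_adj_of_adj hw hw'

lemma IsMutualVisibilitySet.hasExternalMidpoints (hX : G.IsMutualVisibilitySet X)
    (hdist : ∀ u ∈ X, ∀ v ∈ X, G.dist u v ≤ 2) : G.HasExternalMidpoints X := by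
  intro u hu v hv huv hadj
  have hvis := hX u hu v hv
  have h0 : G.dist u v ≠ 0 := hvis.reachable.dist_eq_zero_iff.not.2 huv
  have h1 : G.dist u v ≠ 1 := dist_eq_one_iff_adj.not.2 hadj
  have h2 := hdist u hu v hv
  exact (xVisible_iff_of_dist_eq_two (by omega)).1 hvis

lemma isMutualVisibilitySet_iff_hasExternalMidpoints
    (hdist : ∀ u ∈ X, ∀ v ∈ X, G.dist u v ≤ 2) :
    G.IsMutualVisibilitySet X ↔ G.HasExternalMidpoints X :=
  ⟨fun hX => hX.hasExternalMidpoints hdist, HasExternalMidpoints.isMutualVisibilitySet⟩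

lemma hasExternalMidpoints_iff :
    G.HasExternalMidpoints X ↔
      G.IsMutualVisibilitySet X ∧ ∀ u ∈ X, ∀ v ∈ X, G.dist u v ≤ 2 :=
  ⟨fun h => ⟨h.isMutualVisibilitySet, fun _ hu _ hv => h.dist_le_two hu hv⟩,
    fun ⟨hX, hdist⟩ => hX.hasExternalMidpoints hdist⟩

lemma IsClique.hasExternalMidpoints (h : G.IsClique X) : G.HasExternalMidpoints X :=
  fun _ hu _ hv huv hadj => absurd (h hu hv huv) hadj

lemma IsClique.exists_notMem (hG : G ≠ ⊤) (h : G.IsClique X) : ∃ v, v ∉ X :=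
  Set.ne_univ_iff_exists_notMem X |>.1 fun hX => hG (isClique_univ.1 (hX ▸ h))

lemma HasExternalMidpoints.exists_notMem (h : G.HasExternalMidpoints X) (hX : ¬ G.IsClique X) :
    ∃ v, v ∉ X := by
  obtain ⟨u, hu, v, hv, huv, hadj⟩ : ∃ u ∈ X, ∃ v ∈ X, u ≠ v ∧ ¬ G.Adj u v := by
    simpa [isClique_iff, Set.Pairwise] using hX
  obtain ⟨w, hwX, -⟩ := h u hu v hv huv hadj
  exact ⟨w, hwX⟩

end SimpleGraph

lemma setDiam_eq_iff {β : Type*} {H : SimpleGraph β} {B : Set β} {n : ℕ} (hn : n ≠ 0) :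
    setDiam H B = n ↔
      (∀ u ∈ B, ∀ v ∈ B, H.dist u v ≤ n) ∧ ∃ u ∈ B, ∃ v ∈ B, H.dist u v = n := by
  set S := (fun p : β × β => H.dist p.1 p.2) '' (B ×ˢ B)
  have hS : setDiam H B = n ↔ IsGreatest S n := by
    refine ⟨fun h => ?_, IsGreatest.csSup_eq⟩
    -- `sSup` on `ℕ` is `0` on empty and on unbounded sets
    have hne : S.Nonempty := Set.nonempty_iff_ne_empty.2 fun hempty =>
      hn (h.symm.trans (show sSup S = 0 by rw [hempty, csSup_empty]; rfl))
    have hbdd : BddAbove S := by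
      by_contra hunbdd
      exact hn (h.symm.trans (Nat.sSup_of_not_bddAbove hunbdd))
    exact h ▸ ⟨Nat.sSup_mem hne hbdd, fun _ hm => le_csSup hbdd hm⟩
  rw [hS, IsGreatest, and_comm, mem_upperBounds]
  simp only [S, Set.mem_image, Set.mem_prod, Prod.exists, and_assoc, exists_and_left]
  exact and_congr_left' ⟨fun h u hu v hv => h _ ⟨u, hu, v, hv, rfl⟩,
    fun h _ ⟨u, hu, v, hv, huv⟩ => huv ▸ h u hu v hv⟩

lemma hasExternalMidpoints_iff_of_not_isClique {β : Type*} {H : SimpleGraph β} {B : Set β}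
    (hB : ¬ H.IsClique B) :
    H.HasExternalMidpoints B ↔ H.IsMutualVisibilitySet B ∧ setDiam H B = 2 := by
  rw [hasExternalMidpoints_iff, setDiam_eq_iff two_ne_zero]
  refine ⟨fun ⟨hX, hdist⟩ => ⟨hX, hdist, ?_⟩, fun ⟨hX, hdist, _⟩ => ⟨hX, hdist⟩⟩
  obtain ⟨u, hu, v, hv, huv, hadj⟩ : ∃ u ∈ B, ∃ v ∈ B, u ≠ v ∧ ¬ H.Adj u v := by
    simpa [isClique_iff, Set.Pairwise] using hB
  obtain ⟨w, -, hw, hw'⟩ := hX.hasExternalMidpoints hdist u hu v hv huv hadj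
  exact ⟨u, hu, v, hv, dist_eq_two_of_adj_of_adj huv hadj hw hw'⟩

section Join

variable {α β : Type*} {G : SimpleGraph α} {H : SimpleGraph β}

@[simp]
lemma graphJoin_adj_inl_inl {a a' : α} :
    (graphJoin G H).Adj (.inl a) (.inl a') ↔ G.Adj a a' := by
  simp only [graphJoin, fromRel_adj, ne_eq, Sum.inl.injEq]
  exact ⟨fun ⟨_, h⟩ => h.elim id .symm, fun h => ⟨h.ne, .inl h⟩⟩

@[simp]
lemma graphJoin_adj_inr_inr {b b' : β} :
    (graphJoin G H).Adj (.inr b) (.inr b') ↔ H.Adj b b' := by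
  simp only [graphJoin, fromRel_adj, ne_eq, Sum.inr.injEq]
  exact ⟨fun ⟨_, h⟩ => h.elim id .symm, fun h => ⟨h.ne, .inl h⟩⟩

@[simp]
lemma graphJoin_adj_inl_inr {a : α} {b : β} : (graphJoin G H).Adj (.inl a) (.inr b) := by
  simp [graphJoin]

@[simp]
lemma graphJoin_adj_inr_inl {a : α} {b : β} : (graphJoin G H).Adj (.inr b) (.inl a) :=
  graphJoin_adj_inl_inr.symm

lemma graphJoin_dist_le_two [Nonempty α] [Nonempty β] (u v : α ⊕ β) :
    (graphJoin G H).dist u v ≤ 2 := by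
  rcases u with a | b <;> rcases v with a' | b'
  · exact dist_le_two_of_adj_of_adj (w := .inr (Classical.arbitrary β)) (by simp) (by simp)
  · simp [dist_eq_one_iff_adj.2 graphJoin_adj_inl_inr]
  · simp [dist_eq_one_iff_adj.2 graphJoin_adj_inr_inl]
  · exact dist_le_two_of_adj_of_adj (w := .inl (Classical.arbitrary α)) (by simp) (by simp)

lemma hasExternalMidpoints_graphJoin_iff (hG : G ≠ ⊤) (B : Set β) :
    (graphJoin G H).HasExternalMidpoints (Set.range Sum.inl ∪ Sum.inr '' B) ↔
      (∃ c, c ∉ B) ∧ H.HasExternalMidpoints B := by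
  constructor
  · intro h
    refine ⟨?_, fun b hb b' hb' hne hadj => ?_⟩
    · obtain ⟨a, a', hne, hadj⟩ := ne_top_iff_exists_not_adj.1 hG
      obtain ⟨_ | c, hc, -⟩ := h (.inl a) (by simp) (.inl a') (by simp) (by simpa) (by simpa)
      · simp at hc
      · exact ⟨c, by simpa using hc⟩
    · obtain ⟨_ | c, hc, hw, hw'⟩ := h (.inr b) (by simpa) (.inr b') (by simpa) (by simpa)
        (by simpa)
      · simp at hc
      · exact ⟨c, by simpa using hc, by simpa using hw, by simpa using hw'⟩
  · rintro ⟨⟨c, hc⟩, hB⟩ (a | b) hu (a' | b') hv hne hadj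
    · exact ⟨.inr c, by simpa, by simp, by simp⟩
    · exact absurd graphJoin_adj_inl_inr hadj
    · exact absurd graphJoin_adj_inr_inl hadj
    · obtain ⟨c, hc, hw, hw'⟩ := hB b (by simpa using hu) b' (by simpa using hv)
        (by simpa using hne) (by simpa using hadj)
      exact ⟨.inr c, by simpa, by simpa, by simpa⟩

end Join

theorem join_side_union_mv_iff_general {α β : Type*}
    (G : SimpleGraph α) (H : SimpleGraph β)
    (hG : G ≠ ⊤) (hH : H ≠ ⊤) (B : Set β) :
    (graphJoin G H).IsMutualVisibilitySet (Sum.inl '' (Set.univ : Set α) ∪ Sum.inr '' B) ↔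
      B = ∅ ∨ H.IsClique B ∨ (H.IsMutualVisibilitySet B ∧ setDiam H B = 2) := by
  obtain ⟨a, -⟩ := ne_top_iff_exists_not_adj.1 hG
  obtain ⟨b, -⟩ := ne_top_iff_exists_not_adj.1 hH
  have : Nonempty α := ⟨a⟩
  have : Nonempty β := ⟨b⟩
  rw [Set.image_univ, isMutualVisibilitySet_iff_hasExternalMidpoints
    fun u _ v _ => graphJoin_dist_le_two u v, hasExternalMidpoints_graphJoin_iff hG]
  by_cases hB : H.IsClique B
  · exact iff_of_true ⟨hB.exists_notMem hH, hB.hasExternalMidpoints⟩ (.inr (.inl hB))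
  have hB₀ : B ≠ ∅ := fun h => hB (h ▸ isClique_empty)
  rw [← hasExternalMidpoints_iff_of_not_isClique hB]
  simp only [hB, hB₀, false_or, and_iff_right_iff_imp]
  exact fun h => h.exists_notMem hB

theorem join_side_union_mv_iff {α β : Type*} [Fintype β]
    (G : SimpleGraph α) (H : SimpleGraph β)
    (hG : G ≠ ⊤) (hH : H ≠ ⊤) (hβ : 2 ≤ Fintype.card β) (B : Set β) :
    (graphJoin G H).IsMutualVisibilitySet (Sum.inl '' (Set.univ : Set α) ∪ Sum.inr '' B) ↔
      B = ∅ ∨ H.IsClique B ∨ (H.IsMutualVisibilitySet B ∧ setDiam H B = 2) :=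
  join_side_union_mv_iff_general G H hG hH B
end
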